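/- arXiv:2111.10869 — 6 statements merged into one kernel-verified Lean document; each statement's English description precedes it below -/
import Mathlib

section
/- Let G be an étale groupoid and X a basic right G-space. Then the orbit space projection p : X → X/G is a surjective open local homeomorphism. -/
open Topology

/-- An étale topological groupoid, given by its arrow space `A` and object space `O`. -/
structure EtaleGroupoid (A O : Type) [TopologicalSpace A] [TopologicalSpace O] where
  r : A → O
  s : A → O
  unit : O → A
  mul : A → A → A
  inv : A → A
  r_unit : ∀ o, r (unit o) = o
  s_unit : ∀ o, s (unit o) = o
  r_mul : ∀ g h, s g = r h → r (mul g h) = r g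
  s_mul : ∀ g h, s g = r h → s (mul g h) = s h
  mul_assoc : ∀ g h k, s g = r h → s h = r k → mul (mul g h) k = mul g (mul h k)
  unit_mul : ∀ g, mul (unit (r g)) g = g
  mul_unit : ∀ g, mul g (unit (s g)) = g
  r_inv : ∀ g, r (inv g) = s g
  s_inv : ∀ g, s (inv g) = r g
  mul_inv : ∀ g, mul g (inv g) = unit (r g)
  inv_mul : ∀ g, mul (inv g) g = unit (s g)
  etale_r : IsLocalHomeomorph r
  etale_s : IsLocalHomeomorph s
  continuous_mul : Continuous fun p : { p : A × A // s p.1 = r p.2 } => mul p.1.1 p.1.2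
  continuous_inv : Continuous inv

variable {A O : Type} [TopologicalSpace A] [TopologicalSpace O]

/-- A right action of an étale groupoid on a topological space `X`. -/
structure RightAction (G : EtaleGroupoid A O) (X : Type) [TopologicalSpace X] where
  anchor : X → O
  act : X → A → X
  continuous_anchor : Continuous anchor
  continuous_act :
    Continuous fun p : { p : X × A // anchor p.1 = G.r p.2 } => act p.1.1 p.1.2
  anchor_act : ∀ x g, anchor x = G.r g → anchor (act x g) = G.s g
  act_mul : ∀ x g h, anchor x = G.r g → G.s g = G.r h →
    act (act x g) h = act x (G.mul g h)
  act_unit : ∀ x, act x (G.unit (anchor x)) = x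

/-- A left action of an étale groupoid on a topological space `X`. -/
structure LeftAction (G : EtaleGroupoid A O) (X : Type) [TopologicalSpace X] where
  anchor : X → O
  act : A → X → X
  continuous_anchor : Continuous anchor
  continuous_act :
    Continuous fun p : { p : A × X // G.s p.1 = anchor p.2 } => act p.1.1 p.1.2
  anchor_act : ∀ g x, G.s g = anchor x → anchor (act g x) = G.r g
  mul_act : ∀ g h x, G.s g = G.r h → G.s h = anchor x →
    act g (act h x) = act (G.mul g h) x
  unit_act : ∀ x, act (G.unit (anchor x)) x = x

namespace RightAction

variable {G : EtaleGroupoid A O} {X : Type} [TopologicalSpace X]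

/-- The map `(x, g) ↦ (x·g, x)` on the fibre product `X ×_{s,G⁰,r} G`. -/
def pairMap (ρ : RightAction G X) :
    { p : X × A // ρ.anchor p.1 = G.r p.2 } → X × X :=
  fun p => (ρ.act p.1.1 p.1.2, p.1.1)

/-- The action is *basic* if `pairMap` is a homeomorphism onto its image. -/
def IsBasic (ρ : RightAction G X) : Prop := Topology.IsEmbedding ρ.pairMap

/-- The action is *free* if `pairMap` is injective. -/
def IsFree (ρ : RightAction G X) : Prop := Function.Injective ρ.pairMap

/-- The action is *proper* if `pairMap` is a proper map. -/
def IsProper (ρ : RightAction G X) : Prop := IsProperMap ρ.pairMap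

/-- Two points are orbit equivalent if one is a translate of the other. -/
def OrbitRel (ρ : RightAction G X) (x y : X) : Prop :=
  ∃ g, ρ.anchor x = G.r g ∧ y = ρ.act x g

/-- The orbit space `X/G`, with the quotient topology. -/
def OrbitSpace (ρ : RightAction G X) : Type := Quot ρ.OrbitRel

instance (ρ : RightAction G X) : TopologicalSpace ρ.OrbitSpace :=
  instTopologicalSpaceQuot

/-- The orbit space projection `p : X → X/G`. -/
def orbitMap (ρ : RightAction G X) : X → ρ.OrbitSpace := Quot.mk _

end RightAction

variable {AH OH : Type} [TopologicalSpace AH] [TopologicalSpace OH]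

/-- A groupoid correspondence `X : H ← G`: commuting left `H`- and right `G`-actions
such that the right anchor map is a local homeomorphism and the right action is free
and proper. -/
structure Correspondence (H : EtaleGroupoid AH OH) (G : EtaleGroupoid A O)
    (X : Type) [TopologicalSpace X] where
  left : LeftAction H X
  right : RightAction G X
  sInv_left : ∀ h x, H.s h = left.anchor x →
    right.anchor (left.act h x) = right.anchor x
  rInv_right : ∀ x g, right.anchor x = G.r g →
    left.anchor (right.act x g) = left.anchor x
  comm : ∀ h x g, H.s h = left.anchor x → right.anchor x = G.r g →
    left.act h (right.act x g) = right.act (left.act h x) g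
  etale_s : IsLocalHomeomorph right.anchor
  free : right.IsFree
  proper : right.IsProper

namespace Correspondence

variable {H : EtaleGroupoid AH OH} {G : EtaleGroupoid A O}
  {X : Type} [TopologicalSpace X]

/-- The map `r_* : X/G → H⁰` induced by the left anchor map. -/
def rStar (C : Correspondence H G X) : C.right.OrbitSpace → OH :=
  Quot.lift C.left.anchor (by
    rintro x y ⟨g, hg, rfl⟩
    exact (C.rInv_right x g hg).symm)

end Correspondence

section AuxProof

open Set Topology

variable {A O : Type} [TopologicalSpace A] [TopologicalSpace O]
  {G : EtaleGroupoid A O} {X : Type} [TopologicalSpace X]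

private lemma aux_inv_inv (G : EtaleGroupoid A O) (g : A) : G.inv (G.inv g) = g := by
  have h1 : G.s g = G.r (G.inv g) := (G.r_inv g).symm
  have h2 : G.s (G.inv g) = G.r (G.inv (G.inv g)) := (G.r_inv (G.inv g)).symm
  have key : G.mul (G.mul g (G.inv g)) (G.inv (G.inv g)) = G.inv (G.inv g) := by
    rw [G.mul_inv g]
    have hr : G.r (G.inv (G.inv g)) = G.r g := by rw [G.r_inv, G.s_inv]
    rw [← hr, G.unit_mul]
  rw [G.mul_assoc g (G.inv g) (G.inv (G.inv g)) h1 h2, G.mul_inv (G.inv g), G.r_inv,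
    G.mul_unit g] at key
  exact key.symm

private lemma aux_act_cancel (ρ : RightAction G X) (x : X) (g : A)
    (h : ρ.anchor x = G.r g) : ρ.act (ρ.act x g) (G.inv g) = x := by
  rw [ρ.act_mul x g (G.inv g) h (G.r_inv g).symm, G.mul_inv, ← h, ρ.act_unit]

private lemma aux_equiv (ρ : RightAction G X) : Equivalence ρ.OrbitRel := by
  constructor
  · intro x; exact ⟨G.unit (ρ.anchor x), (G.r_unit _).symm, (ρ.act_unit x).symm⟩
  · rintro x y ⟨g, h1, rfl⟩
    exact ⟨G.inv g, by rw [ρ.anchor_act x g h1, G.r_inv], (aux_act_cancel ρ x g h1).symm⟩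
  · rintro x y z ⟨g, h1, rfl⟩ ⟨h, h2, rfl⟩
    have hsr : G.s g = G.r h := by rw [← ρ.anchor_act x g h1]; exact h2
    exact ⟨G.mul g h, by rw [G.r_mul g h hsr]; exact h1, ρ.act_mul x g h h1 hsr⟩

private lemma aux_mk_eq (ρ : RightAction G X) {x y : X} :
    ρ.orbitMap x = ρ.orbitMap y ↔ ρ.OrbitRel x y :=
  ⟨fun h => (aux_equiv ρ).eqvGen_iff.mp (Quot.eqvGen_exact h), fun h => Quot.sound h⟩

/-- The flip map `(x, g) ↦ (x·g, g⁻¹)` on the fibre product. -/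
private def auxPhi (ρ : RightAction G X) (z : {p : X × A // ρ.anchor p.1 = G.r p.2}) :
    {p : X × A // ρ.anchor p.1 = G.r p.2} :=
  ⟨(ρ.act z.1.1 z.1.2, G.inv z.1.2), by rw [ρ.anchor_act _ _ z.2, G.r_inv]⟩

private lemma auxPhi_continuous (ρ : RightAction G X) : Continuous (auxPhi ρ) :=
  Continuous.subtype_mk
    (ρ.continuous_act.prodMk
      (G.continuous_inv.comp (continuous_snd.comp continuous_subtype_val))) _

private lemma auxPhi_involutive (ρ : RightAction G X)
    (z : {p : X × A // ρ.anchor p.1 = G.r p.2}) : auxPhi ρ (auxPhi ρ z) = z := by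
  apply Subtype.ext
  apply Prod.ext
  · exact aux_act_cancel ρ z.1.1 z.1.2 z.2
  · exact aux_inv_inv G z.1.2

/-- The first projection from the fibre product is an open map (since `r` is étale). -/
private lemma aux_fst_isOpenMap (ρ : RightAction G X) :
    IsOpenMap (fun z : {p : X × A // ρ.anchor p.1 = G.r p.2} => z.1.1) := by
  intro W hW
  obtain ⟨V₀, hV₀, hpre⟩ := isOpen_induced_iff.mp hW
  rw [isOpen_iff_mem_nhds]
  rintro x ⟨z, hzW, rfl⟩
  have hzV₀ : z.1 ∈ V₀ := by rw [← hpre] at hzW; exact hzW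
  obtain ⟨U₁, V₁, hU₁, hV₁, hxU₁, hgV₁, hsub⟩ :=
    isOpen_prod_iff.mp hV₀ z.1.1 z.1.2 hzV₀
  obtain ⟨e, hge, heq⟩ := G.etale_r z.1.2
  have hN : IsOpen (U₁ ∩ ρ.anchor ⁻¹' (e '' (V₁ ∩ e.source))) := by
    refine hU₁.inter (IsOpen.preimage ρ.continuous_anchor ?_)
    exact e.isOpen_image_of_subset_source (hV₁.inter e.open_source) inter_subset_right
  refine Filter.mem_of_superset (hN.mem_nhds ⟨hxU₁, ?_⟩) ?_
  · exact ⟨z.1.2, ⟨hgV₁, hge⟩, by rw [← heq]; exact z.2.symm⟩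
  · rintro x' ⟨hx'U₁, g', ⟨hg'V₁, hg'e⟩, hg'⟩
    have hz' : ρ.anchor x' = G.r g' := by rw [heq]; exact hg'.symm
    refine ⟨⟨(x', g'), hz'⟩, ?_, rfl⟩
    rw [← hpre]
    exact hsub ⟨hx'U₁, hg'V₁⟩

/-- The action map from the fibre product is an open map. -/
private lemma aux_act_isOpenMap (ρ : RightAction G X) :
    IsOpenMap (fun z : {p : X × A // ρ.anchor p.1 = G.r p.2} => ρ.act z.1.1 z.1.2) := by
  intro U hU
  have himage : (fun z : {p : X × A // ρ.anchor p.1 = G.r p.2} => ρ.act z.1.1 z.1.2) '' U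
      = (fun z : {p : X × A // ρ.anchor p.1 = G.r p.2} => z.1.1) '' (auxPhi ρ '' U) := by
    rw [Set.image_image]; rfl
  have hinv : auxPhi ρ '' U = auxPhi ρ ⁻¹' U := by
    ext z
    constructor
    · rintro ⟨w, hw, rfl⟩
      simpa [auxPhi_involutive] using hw
    · intro hz
      exact ⟨auxPhi ρ z, hz, auxPhi_involutive ρ z⟩
  rw [himage, hinv]
  exact aux_fst_isOpenMap ρ _ (hU.preimage (auxPhi_continuous ρ))

end AuxProof
/-- For a basic right action of an étale groupoid `G` on a space `X`, the orbit
space projection `p : X → X/G` is a surjective open local homeomorphism. -/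
theorem basic_orbitMap_surjective_open_isLocalHomeomorph
    {A O : Type} [TopologicalSpace A] [TopologicalSpace O]
    {G : EtaleGroupoid A O} {X : Type} [TopologicalSpace X]
    (ρ : RightAction G X) (hbasic : ρ.IsBasic) :
    Function.Surjective ρ.orbitMap ∧ IsOpenMap ρ.orbitMap ∧
      IsLocalHomeomorph ρ.orbitMap := by
  have hcont : Continuous ρ.orbitMap := continuous_quot_mk
  -- Openness of the orbit map.
  have hopen : IsOpenMap ρ.orbitMap := by
    intro U hU
    refine isQuotientMap_quot_mk.isOpen_preimage.mp ?_
    have heq : ρ.orbitMap ⁻¹' (ρ.orbitMap '' U)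
        = (fun z : {p : X × A // ρ.anchor p.1 = G.r p.2} => ρ.act z.1.1 z.1.2) ''
          ((fun z : {p : X × A // ρ.anchor p.1 = G.r p.2} => z.1.1) ⁻¹' U) := by
      ext v
      simp only [Set.mem_preimage, Set.mem_image]
      constructor
      · rintro ⟨u, hu, h⟩
        obtain ⟨g, hg, rfl⟩ := (aux_mk_eq ρ).mp h
        exact ⟨⟨(u, g), hg⟩, hu, rfl⟩
      · rintro ⟨⟨⟨u, g⟩, hz⟩, hu, rfl⟩
        exact ⟨u, hu, (aux_mk_eq ρ).mpr ⟨g, hz, rfl⟩⟩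
    show IsOpen (ρ.orbitMap ⁻¹' (ρ.orbitMap '' U))
    rw [heq]
    exact aux_act_isOpenMap ρ _
      (hU.preimage (continuous_fst.comp continuous_subtype_val))
  -- Local injectivity of the orbit map.
  have hlocinj : ∀ x₀ : X, ∃ U : Set X, IsOpen U ∧ x₀ ∈ U ∧ Set.InjOn ρ.orbitMap U := by
    intro x₀
    set z₀ : {p : X × A // ρ.anchor p.1 = G.r p.2} :=
      ⟨(x₀, G.unit (ρ.anchor x₀)), by rw [G.r_unit]⟩ with hz₀def
    obtain ⟨e, hge, heqr⟩ := G.etale_r z₀.1.2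
    set W : Set {p : X × A // ρ.anchor p.1 = G.r p.2} := {z | z.1.2 ∈ e.source} with hWdef
    have hWopen : IsOpen W :=
      e.open_source.preimage (continuous_snd.comp continuous_subtype_val)
    have hz₀W : z₀ ∈ W := hge
    have hWinj : Set.InjOn (fun z : {p : X × A // ρ.anchor p.1 = G.r p.2} => z.1.1) W := by
      intro z hz z' hz' h
      have h1 : (z : X × A).1 = (z' : X × A).1 := h
      have h2 : e z.1.2 = e z'.1.2 := by
        rw [← heqr, ← z.2, ← z'.2]
        exact congrArg ρ.anchor h1
      exact Subtype.ext (Prod.ext h1 (e.injOn hz hz' h2))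
    obtain ⟨V', hV'open, hV'pre⟩ := hbasic.toIsInducing.isOpen_iff.mp hWopen
    have hpair_z₀ : ρ.pairMap z₀ = (x₀, x₀) := by
      show (ρ.act x₀ (G.unit (ρ.anchor x₀)), x₀) = (x₀, x₀)
      rw [ρ.act_unit]
    have hxx : (x₀, x₀) ∈ V' := by
      rw [← hpair_z₀]
      have : z₀ ∈ ρ.pairMap ⁻¹' V' := by rw [hV'pre]; exact hz₀W
      exact this
    obtain ⟨U₁, U₂, hU₁, hU₂, hxU₁, hxU₂, hsub⟩ := isOpen_prod_iff.mp hV'open x₀ x₀ hxx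
    refine ⟨U₁ ∩ U₂, hU₁.inter hU₂, ⟨hxU₁, hxU₂⟩, ?_⟩
    intro u hu v hv hp
    obtain ⟨g, hg, rfl⟩ := (aux_mk_eq ρ).mp hp
    set z₁ : {p : X × A // ρ.anchor p.1 = G.r p.2} := ⟨(u, g), hg⟩ with hz₁def
    set z₂ : {p : X × A // ρ.anchor p.1 = G.r p.2} :=
      ⟨(u, G.unit (ρ.anchor u)), by rw [G.r_unit]⟩ with hz₂def
    have hz₁W : z₁ ∈ W := by
      have h' : z₁ ∈ ρ.pairMap ⁻¹' V' := hsub ⟨hv.1, hu.2⟩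
      rwa [hV'pre] at h'
    have hz₂W : z₂ ∈ W := by
      have hpair₂ : ρ.pairMap z₂ = (u, u) := by
        show (ρ.act u (G.unit (ρ.anchor u)), u) = (u, u)
        rw [ρ.act_unit]
      have h' : z₂ ∈ ρ.pairMap ⁻¹' V' := by
        show ρ.pairMap z₂ ∈ V'
        rw [hpair₂]; exact hsub ⟨hu.1, hu.2⟩
      rwa [hV'pre] at h'
    have hzz : z₁ = z₂ := hWinj hz₁W hz₂W rfl
    have hgu : g = G.unit (ρ.anchor u) := congrArg (fun z => z.1.2) hzz
    rw [hgu, ρ.act_unit]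
  -- Assemble.
  refine ⟨fun q => Quot.exists_rep q, hopen, ?_⟩
  rw [isLocalHomeomorph_iff_isOpenEmbedding_restrict]
  intro x
  obtain ⟨U, hUo, hxU, hinj⟩ := hlocinj x
  refine ⟨U, hUo.mem_nhds hxU, ?_⟩
  rw [isOpenEmbedding_iff_continuous_injective_isOpenMap]
  exact ⟨hcont.comp continuous_subtype_val,
    fun a b hab => Subtype.ext (hinj a.2 b.2 hab), hopen.restrict hUo⟩
end

section
/- Let G be an étale groupoid and X a basic right G-space such that X ×_{p,X/G,p} X is closed in X × X. Then the map F : X ×_{s,G⁰,r} G → X × X, (x,g) ↦ (x·g, x), is proper. -/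
open Topology

variable {A O : Type} [TopologicalSpace A] [TopologicalSpace O]

variable {AH OH : Type} [TopologicalSpace AH] [TopologicalSpace OH]

/-!
The image of `F` is exactly `X ×_{p,X/G,p} X`, because orbit equivalence is already an
equivalence relation, so `p x = p y` holds precisely when `y = x·g` for some `g`. A basic action
with this image closed makes `F` a closed embedding, and closed embeddings are proper.
-/

namespace RightAction

variable {G : EtaleGroupoid A O} {X : Type} [TopologicalSpace X] (ρ : RightAction G X)

theorem orbitRel_equivalence : Equivalence ρ.OrbitRel where
  refl x := ⟨G.unit (ρ.anchor x), (G.r_unit _).symm, (ρ.act_unit x).symm⟩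
  symm := by
    rintro x _ ⟨g, hg, rfl⟩
    refine ⟨G.inv g, by rw [ρ.anchor_act x g hg, G.r_inv], ?_⟩
    rw [ρ.act_mul x g (G.inv g) hg (G.r_inv g).symm, G.mul_inv, ← hg, ρ.act_unit]
  trans := by
    rintro x _ _ ⟨g, hg, rfl⟩ ⟨h, hh, rfl⟩
    have hgh : G.s g = G.r h := (ρ.anchor_act x g hg).symm.trans hh
    exact ⟨G.mul g h, (G.r_mul g h hgh).symm ▸ hg, ρ.act_mul x g h hg hgh⟩

theorem orbitMap_eq_orbitMap_iff {x y : X} : ρ.orbitMap x = ρ.orbitMap y ↔ ρ.OrbitRel x y :=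
  ρ.orbitRel_equivalence.quot_mk_eq_iff x y

theorem range_pairMap :
    Set.range ρ.pairMap = { q : X × X | ρ.orbitMap q.1 = ρ.orbitMap q.2 } := by
  ext ⟨y, x⟩
  change _ ↔ ρ.orbitMap y = ρ.orbitMap x
  rw [eq_comm, orbitMap_eq_orbitMap_iff]
  constructor
  · rintro ⟨⟨⟨x, g⟩, hg⟩, hxy⟩
    cases hxy
    exact ⟨g, hg, rfl⟩
  · rintro ⟨g, hg, rfl⟩
    exact ⟨⟨(x, g), hg⟩, rfl⟩

end RightAction

/-- For a basic right action of an étale groupoid `G` on a space `X` such that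
`X ×_{p,X/G,p} X` is closed in `X × X`, the map
`F : X ×_{s,G⁰,r} G → X × X`, `(x,g) ↦ (x·g, x)`, is proper. -/
theorem basic_closed_pairMap_isProperMap
    {A O : Type} [TopologicalSpace A] [TopologicalSpace O]
    {G : EtaleGroupoid A O} {X : Type} [TopologicalSpace X]
    (ρ : RightAction G X) (hbasic : ρ.IsBasic)
    (hclosed : IsClosed { q : X × X | ρ.orbitMap q.1 = ρ.orbitMap q.2 }) :
    IsProperMap ρ.pairMap :=
  (IsClosedEmbedding.mk hbasic (ρ.range_pairMap ▸ hclosed)).isProperMap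
end

section
/- Let G be an étale groupoid and X a right G-space. The following are equivalent: (1) the G-action on X is basic and the orbit space X/G is Hausdorff; (2) the G-action on X is free and proper. -/
open Topology

variable {A O : Type} [TopologicalSpace A] [TopologicalSpace O]

variable {AH OH : Type} [TopologicalSpace AH] [TopologicalSpace OH]

section AuxLemmas

open Set

variable {A O : Type} [TopologicalSpace A] [TopologicalSpace O]
  {G : EtaleGroupoid A O} {X : Type} [TopologicalSpace X] (ρ : RightAction G X)

lemma orbitRel_equivalence : Equivalence ρ.OrbitRel := by
  constructor
  · intro x
    exact ⟨G.unit (ρ.anchor x), (G.r_unit _).symm, (ρ.act_unit x).symm⟩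
  · rintro x y ⟨g, hg, rfl⟩
    refine ⟨G.inv g, ?_, ?_⟩
    · rw [ρ.anchor_act x g hg, G.r_inv]
    · rw [ρ.act_mul x g (G.inv g) hg (G.r_inv g).symm, G.mul_inv, ← hg, ρ.act_unit]
  · rintro x y z ⟨g, hg, rfl⟩ ⟨h, hh, rfl⟩
    rw [ρ.anchor_act x g hg] at hh
    exact ⟨G.mul g h, by rw [G.r_mul g h hh, ← hg],
      ρ.act_mul x g h hg hh⟩

lemma orbitMap_eq_iff {x y : X} : ρ.orbitMap x = ρ.orbitMap y ↔ ρ.OrbitRel x y := by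
  constructor
  · intro h
    exact ((orbitRel_equivalence ρ).eqvGen_iff).mp (Quot.eqvGen_exact h)
  · exact Quot.sound

lemma range_pairMap : Set.range ρ.pairMap = {p : X × X | ρ.OrbitRel p.2 p.1} := by
  ext p
  constructor
  · rintro ⟨⟨⟨x, g⟩, hxg⟩, rfl⟩
    exact ⟨g, hxg, rfl⟩
  · rintro ⟨g, hg, hp⟩
    exact ⟨⟨(p.2, g), hg⟩, by simp [RightAction.pairMap, ← hp]⟩

lemma isOpenMap_orbitMap : IsOpenMap ρ.orbitMap := by
  intro U hU
  refine (isQuotientMap_quot_mk).isOpen_preimage.mp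
    (?_ : IsOpen (Quot.mk ρ.OrbitRel ⁻¹' (ρ.orbitMap '' U)))
  have hsat : Quot.mk ρ.OrbitRel ⁻¹' (ρ.orbitMap '' U) =
      {y | ∃ x ∈ U, ρ.OrbitRel x y} := by
    ext y
    constructor
    · rintro ⟨x, hxU, hxy⟩
      exact ⟨x, hxU, (orbitMap_eq_iff ρ).mp hxy⟩
    · rintro ⟨x, hxU, hxy⟩
      exact ⟨x, hxU, (orbitMap_eq_iff ρ).mpr hxy⟩
  rw [hsat]
  rw [isOpen_iff_forall_mem_open]
  rintro y ⟨x, hxU, g, hg, rfl⟩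
  -- get bisection neighborhood of g
  obtain ⟨e, hge, her⟩ := G.etale_r g
  obtain ⟨e', hge', hes⟩ := G.etale_s g
  set W : Set A := e.source ∩ e'.source with hW
  have hWo : IsOpen W := e.open_source.inter e'.open_source
  have hWr : W ⊆ e.source := inter_subset_left
  have hWs : W ⊆ e'.source := inter_subset_right
  set D : Set X := ρ.anchor ⁻¹' (e '' W) with hD
  set D' : Set X := ρ.anchor ⁻¹' (e' '' W) with hD'
  have hDo : IsOpen D :=
    (e.isOpen_image_of_subset_source hWo hWr).preimage ρ.continuous_anchor
  have hD'o : IsOpen D' :=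
    (e'.isOpen_image_of_subset_source hWo hWs).preimage ρ.continuous_anchor
  -- key pointwise facts
  have memW_r : ∀ z ∈ D, e.symm (ρ.anchor z) ∈ W := by
    rintro z ⟨w, hwW, hwz⟩
    rw [← hwz, e.left_inv (hWr hwW)]; exact hwW
  have anchor_r : ∀ z ∈ D, ρ.anchor z = G.r (e.symm (ρ.anchor z)) := by
    rintro z hz
    obtain ⟨w, hwW, hwz⟩ := hz
    rw [her]
    exact (e.right_inv (by rw [← hwz]; exact e.map_source (hWr hwW))).symm
  have memW_s : ∀ z ∈ D', e'.symm (ρ.anchor z) ∈ W := by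
    rintro z ⟨w, hwW, hwz⟩
    rw [← hwz, e'.left_inv (hWs hwW)]; exact hwW
  have anchor_s : ∀ z ∈ D', ρ.anchor z = G.s (e'.symm (ρ.anchor z)) := by
    rintro z hz
    obtain ⟨w, hwW, hwz⟩ := hz
    rw [hes]
    exact (e'.right_inv (by rw [← hwz]; exact e'.map_source (hWs hwW))).symm
  set φ : X → X := fun z => ρ.act z (e.symm (ρ.anchor z)) with hφ
  set ψ : X → X := fun z => ρ.act z (G.inv (e'.symm (ρ.anchor z))) with hψ
  have hφmem : ∀ z ∈ D, φ z ∈ D' := by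
    intro z hz
    refine ⟨e.symm (ρ.anchor z), memW_r z hz, ?_⟩
    rw [← hes, ← ρ.anchor_act z _ (anchor_r z hz)]
  have hφrel : ∀ z ∈ D, ρ.OrbitRel z (φ z) := fun z hz =>
    ⟨e.symm (ρ.anchor z), anchor_r z hz, rfl⟩
  have hψφ : ∀ z ∈ D, ψ (φ z) = z := by
    intro z hz
    have h1 : ρ.anchor (φ z) = G.s (e.symm (ρ.anchor z)) :=
      ρ.anchor_act z _ (anchor_r z hz)
    have h2 : e'.symm (ρ.anchor (φ z)) = e.symm (ρ.anchor z) := by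
      rw [h1, hes, e'.left_inv (hWs (memW_r z hz))]
    show ρ.act (φ z) (G.inv (e'.symm (ρ.anchor (φ z)))) = z
    rw [h2, hφ]
    rw [ρ.act_mul z _ _ (anchor_r z hz) (G.r_inv _).symm, G.mul_inv,
      ← anchor_r z hz, ρ.act_unit]
  have hψmem : ∀ z ∈ D', ψ z ∈ D := by
    intro z hz
    refine ⟨e'.symm (ρ.anchor z), memW_s z hz, ?_⟩
    have hra : ρ.anchor z = G.r (G.inv (e'.symm (ρ.anchor z))) := by
      rw [G.r_inv]; exact anchor_s z hz
    rw [← her, ← G.s_inv (e'.symm (ρ.anchor z))]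
    exact (ρ.anchor_act z _ hra).symm
  have hφψ : ∀ z ∈ D', φ (ψ z) = z := by
    intro z hz
    have hra : ρ.anchor z = G.r (G.inv (e'.symm (ρ.anchor z))) := by
      rw [G.r_inv]; exact anchor_s z hz
    have h1 : ρ.anchor (ψ z) = G.s (G.inv (e'.symm (ρ.anchor z))) :=
      ρ.anchor_act z _ hra
    have h2 : e.symm (ρ.anchor (ψ z)) = e'.symm (ρ.anchor z) := by
      rw [h1, G.s_inv, her, e.left_inv (hWr (memW_s z hz))]
    show ρ.act (ψ z) (e.symm (ρ.anchor (ψ z))) = z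
    rw [h2, hψ]
    rw [ρ.act_mul z _ _ hra (by rw [G.s_inv]), G.inv_mul,
      ← anchor_s z hz, ρ.act_unit]
  -- the restricted inverse map is continuous
  have hΨcont : Continuous fun z : D' => ψ (z : X) := by
    have hsub : Continuous fun z : D' =>
        (⟨((z : X), G.inv (e'.symm (ρ.anchor (z : X)))),
          by rw [G.r_inv]; exact anchor_s (z : X) z.2⟩ :
          { p : X × A // ρ.anchor p.1 = G.r p.2 }) := by
      refine Continuous.subtype_mk ?_ _
      refine Continuous.prodMk continuous_subtype_val ?_
      refine G.continuous_inv.comp ?_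
      refine e'.continuousOn_symm.comp_continuous
        (ρ.continuous_anchor.comp continuous_subtype_val) ?_
      rintro ⟨z, w, hwW, hwz⟩
      simp only
      rw [← hwz]
      exact e'.map_source (hWs hwW)
    exact ρ.continuous_act.comp hsub
  -- the candidate open neighborhood
  set V : Set X := Subtype.val '' ((fun z : D' => ψ (z : X)) ⁻¹' (U ∩ D)) with hV
  have hVo : IsOpen V :=
    hD'o.isOpenMap_subtype_val _ (hΨcont.isOpen_preimage _ (hU.inter hDo))
  refine ⟨V, ?_, hVo, ?_⟩
  · rintro v ⟨⟨v', hv'⟩, hpre, rfl⟩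
    exact ⟨ψ v', hpre.1, by
      have := hφrel (ψ v') (hψmem v' hv')
      rwa [hφψ v' hv'] at this⟩
  · -- the original point y = ρ.act x g lies in V
    have hxD : x ∈ D := ⟨g, ⟨hge, hge'⟩, by rw [← her]; exact hg.symm⟩
    have hgx : e.symm (ρ.anchor x) = g := by rw [hg, her, e.left_inv hge]
    have hφx : φ x = ρ.act x g := by rw [hφ]; simp [hgx]
    refine ⟨⟨ρ.act x g, by rw [← hφx]; exact hφmem x hxD⟩, ?_, rfl⟩
    show ψ (ρ.act x g) ∈ U ∩ D
    rw [← hφx, hψφ x hxD]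
    exact ⟨hxU, hxD⟩

end AuxLemmas
/-- For a right action of an étale groupoid `G` on a space `X`, the following
are equivalent: (1) the action is basic and the orbit space `X/G` is Hausdorff;
(2) the action is free and proper. -/
theorem basic_t2_iff_free_proper
    {A O : Type} [TopologicalSpace A] [TopologicalSpace O]
    {G : EtaleGroupoid A O} {X : Type} [TopologicalSpace X]
    (ρ : RightAction G X) :
    (ρ.IsBasic ∧ T2Space ρ.OrbitSpace) ↔ (ρ.IsFree ∧ ρ.IsProper) := by
  constructor
  · rintro ⟨hb, ht⟩
    have hclosed : IsClosed (Set.range ρ.pairMap) := by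
      rw [range_pairMap]
      have : {p : X × X | ρ.OrbitRel p.2 p.1} =
          (fun p : X × X => (ρ.orbitMap p.2, ρ.orbitMap p.1)) ⁻¹'
            {q : ρ.OrbitSpace × ρ.OrbitSpace | q.1 = q.2} := by
        ext p
        simp only [Set.mem_preimage, Set.mem_setOf_eq]
        exact (orbitMap_eq_iff ρ).symm
      rw [this]
      haveI := ht
      have hqc : Continuous ρ.orbitMap := isQuotientMap_quot_mk.continuous
      exact isClosed_diagonal.preimage
        ((hqc.comp continuous_snd).prodMk (hqc.comp continuous_fst))
    have hce : Topology.IsClosedEmbedding ρ.pairMap := ⟨hb, hclosed⟩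
    exact ⟨hb.injective, hce.isProperMap⟩
  · rintro ⟨hf, hp⟩
    have hce : Topology.IsClosedEmbedding ρ.pairMap :=
      .of_continuous_injective_isClosedMap hp.continuous hf hp.isClosedMap
    refine ⟨hce.toIsEmbedding, ?_⟩
    have hclosed : IsClosed {p : X × X | ρ.OrbitRel p.2 p.1} := by
      rw [← range_pairMap]; exact hce.isClosed_range
    constructor
    intro a b hab
    obtain ⟨x, rfl⟩ := Quot.exists_rep a
    obtain ⟨y, rfl⟩ := Quot.exists_rep b
    have hxy : ¬ ρ.OrbitRel x y := fun h => hab (Quot.sound h)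
    have hmem : ((y, x) : X × X) ∈ {p : X × X | ρ.OrbitRel p.2 p.1}ᶜ := hxy
    obtain ⟨u, v, hu, hv, hyu, hxv, huv⟩ :=
      (isOpen_prod_iff.mp hclosed.isOpen_compl) y x hmem
    refine ⟨ρ.orbitMap '' v, ρ.orbitMap '' u,
      (isOpenMap_orbitMap ρ) v hv, (isOpenMap_orbitMap ρ) u hu,
      ⟨x, hxv, rfl⟩, ⟨y, hyu, rfl⟩, ?_⟩
    rw [Set.disjoint_left]
    rintro c ⟨v₀, hv₀, rfl⟩ ⟨u₀, hu₀, hc⟩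
    have hrel : ρ.OrbitRel v₀ u₀ := (orbitMap_eq_iff ρ).mp hc.symm
    exact huv (Set.mk_mem_prod hu₀ hv₀) hrel
end

section
/- Let G be an étale groupoid, A a right G-space with a proper action, and B a Hausdorff left G-space. Then the diagonal G-action on A ×_{s,G⁰,r} B defined by g·(a,b) = (a·g⁻¹, g·b) is proper. -/
open Topology

variable {A O : Type} [TopologicalSpace A] [TopologicalSpace O]

variable {AH OH : Type} [TopologicalSpace AH] [TopologicalSpace OH]

section Statement8

variable {A O Aᵣ B : Type} [TopologicalSpace A] [TopologicalSpace O]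
  [TopologicalSpace Aᵣ] [TopologicalSpace B]
  {G : EtaleGroupoid A O}

/-- The map witnessing properness of the diagonal `G`-action
`g·(a,b) = (a·g⁻¹, g·b)` on the fibre product `A ×_{s,G⁰,r} B`:
`(g,a,b) ↦ ((a·g⁻¹, g·b), (a,b))`. -/
def diagonalPairMap (ρ : RightAction G Aᵣ) (lam : LeftAction G B) :
    { t : A × Aᵣ × B // G.s t.1 = ρ.anchor t.2.1 ∧ ρ.anchor t.2.1 = lam.anchor t.2.2 } →
      { p : Aᵣ × B // ρ.anchor p.1 = lam.anchor p.2 } ×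
        { p : Aᵣ × B // ρ.anchor p.1 = lam.anchor p.2 } :=
  fun t =>
    (⟨(ρ.act t.1.2.1 (G.inv t.1.1), lam.act t.1.1 t.1.2.2), by
        rw [ρ.anchor_act _ _ (t.2.1.symm.trans (G.r_inv _).symm), G.s_inv,
          lam.anchor_act _ _ (t.2.1.trans t.2.2)]⟩,
      ⟨t.1.2, t.2.2⟩)

/-!
Write points of the domain as `(g, a, b)`. Forgetting the coordinate `g·b`, the diagonal pair
map becomes `(g, a, b) ↦ (a·g⁻¹, (a, b))`, and this map is proper: along an ultrafilter on
which `a·g⁻¹` and `a` converge, properness of the action on `A` makes `g⁻¹`, hence `g`,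
converge. Adjoining the continuous coordinate `g·b`, which takes values in the Hausdorff
space `B`, preserves properness, and the diagonal pair map is obtained from the result by an
injective continuous rearrangement of coordinates.
-/

open Filter

theorem IsProperMap.prodMk_of_t2 {X Y Z : Type*} [TopologicalSpace X] [TopologicalSpace Y]
    [TopologicalSpace Z] [T2Space Z] {f : X → Y} {k : X → Z} (hf : IsProperMap f)
    (hk : Continuous k) : IsProperMap fun x => (f x, k x) := by
  refine isProperMap_iff_ultrafilter.2 ⟨hf.continuous.prodMk hk, ?_⟩
  rintro 𝒰 ⟨y, z⟩ hlim
  rw [nhds_prod_eq, tendsto_prod_iff'] at hlim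
  obtain ⟨x, rfl, hx⟩ := hf.ultrafilter_le_nhds_of_tendsto hlim.1
  have hkx : k x = z := tendsto_nhds_unique ((hk.tendsto x).comp hx) hlim.2
  exact ⟨x, by rw [hkx], hx⟩

namespace EtaleGroupoid

theorem inv_inv (g : A) : G.inv (G.inv g) = g :=
  calc G.inv (G.inv g)
      = G.mul (G.unit (G.r g)) (G.inv (G.inv g)) := by
        simpa only [G.r_inv, G.s_inv] using (G.unit_mul (G.inv (G.inv g))).symm
    _ = G.mul (G.mul g (G.inv g)) (G.inv (G.inv g)) := by rw [G.mul_inv]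
    _ = G.mul g (G.mul (G.inv g) (G.inv (G.inv g))) :=
        G.mul_assoc _ _ _ (G.r_inv g).symm (G.r_inv _).symm
    _ = g := by rw [G.mul_inv, G.r_inv, G.mul_unit]

theorem tendsto_of_tendsto_inv {ι : Type*} {l : Filter ι} {u : ι → A} {h : A}
    (hu : Tendsto (fun i => G.inv (u i)) l (𝓝 h)) : Tendsto u l (𝓝 (G.inv h)) := by
  simpa only [Function.comp_def, G.inv_inv] using (G.continuous_inv.tendsto h).comp hu

end EtaleGroupoid

section FibreProduct

variable (ρ : RightAction G Aᵣ) (lam : LeftAction G B)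

abbrev DiagonalDomain : Type :=
  { t : A × Aᵣ × B // G.s t.1 = ρ.anchor t.2.1 ∧ ρ.anchor t.2.1 = lam.anchor t.2.2 }

abbrev FibreProduct : Type := { p : Aᵣ × B // ρ.anchor p.1 = lam.anchor p.2 }

namespace DiagonalDomain

variable {ρ lam}

def toPairDomain (t : DiagonalDomain ρ lam) : { p : Aᵣ × A // ρ.anchor p.1 = G.r p.2 } :=
  ⟨(t.1.2.1, G.inv t.1.1), t.2.1.symm.trans (G.r_inv _).symm⟩

def toActDomain (t : DiagonalDomain ρ lam) : { p : A × B // G.s p.1 = lam.anchor p.2 } :=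
  ⟨(t.1.1, t.1.2.2), t.2.1.trans t.2.2⟩

theorem continuous_toPairDomain : Continuous (toPairDomain (ρ := ρ) (lam := lam)) :=
  Continuous.subtype_mk (by have := G.continuous_inv; fun_prop) _

theorem continuous_toActDomain : Continuous (toActDomain (ρ := ρ) (lam := lam)) :=
  Continuous.subtype_mk (by fun_prop) _

end DiagonalDomain

open DiagonalDomain

theorem continuous_diagonalPairMap : Continuous (diagonalPairMap ρ lam) := by
  have hρ := ρ.continuous_act.comp (continuous_toPairDomain (lam := lam))
  have hlam := lam.continuous_act.comp (continuous_toActDomain (ρ := ρ))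
  exact ((hρ.prodMk hlam).subtype_mk _).prodMk
    ((continuous_snd.comp continuous_subtype_val).subtype_mk _)

def rightTranslatePair (t : DiagonalDomain ρ lam) : Aᵣ × FibreProduct ρ lam :=
  (ρ.act t.1.2.1 (G.inv t.1.1), ⟨t.1.2, t.2.2⟩)

theorem isProperMap_rightTranslatePair (hproper : ρ.IsProper) :
    IsProperMap (rightTranslatePair ρ lam) := by
  refine isProperMap_iff_ultrafilter.2 ⟨?_, ?_⟩
  · exact (ρ.continuous_act.comp continuous_toPairDomain).prodMk
      ((continuous_snd.comp continuous_subtype_val).subtype_mk _)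
  rintro 𝒰 ⟨a₁, ⟨⟨a₂, b₂⟩, hab⟩⟩ hlim
  simp only [rightTranslatePair, nhds_prod_eq, tendsto_prod_iff', tendsto_subtype_rng] at hlim
  obtain ⟨ha₁, ha₂, hb₂⟩ := hlim
  have hpair : Tendsto (ρ.pairMap ∘ toPairDomain) (𝒰 : Filter (DiagonalDomain ρ lam))
      (𝓝 (a₁, a₂)) := ha₁.prodMk_nhds ha₂
  obtain ⟨⟨⟨x, h⟩, hxh⟩, hx, hlim⟩ := hproper.ultrafilter_le_nhds_of_tendsto
    (f := ρ.pairMap) (𝒰 := 𝒰.map toPairDomain) (tendsto_map'_iff.2 hpair)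
  obtain ⟨hx₁, rfl⟩ : ρ.act x h = a₁ ∧ x = a₂ := Prod.ext_iff.1 hx
  have hg : Tendsto (fun t : DiagonalDomain ρ lam => t.1.1) 𝒰 (𝓝 (G.inv h)) :=
    G.tendsto_of_tendsto_inv <| (continuous_snd.comp continuous_subtype_val).tendsto _
      |>.comp (tendsto_map'_iff.1 hlim)
  refine ⟨⟨(G.inv h, x, b₂), by rw [G.s_inv, hxh], hab⟩, ?_, ?_⟩
  · simp only [rightTranslatePair, G.inv_inv, hx₁]
  · rw [nhds_subtype_eq_comap, ← map_le_iff_le_comap]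
    exact hg.prodMk_nhds (ha₂.prodMk_nhds hb₂)

end FibreProduct

/-- If a right `G`-action on `A` is proper and `B` is a Hausdorff left `G`-space,
then the diagonal `G`-action `g·(a,b) = (a·g⁻¹, g·b)` on `A ×_{s,G⁰,r} B` is
proper. -/
theorem diagonal_action_proper
    (ρ : RightAction G Aᵣ) (lam : LeftAction G B) [T2Space B]
    (hproper : ρ.IsProper) :
    IsProperMap (diagonalPairMap ρ lam) := by
  have hext : IsProperMap fun t => (rightTranslatePair ρ lam t, lam.act t.1.1 t.1.2.2) :=
    (isProperMap_rightTranslatePair ρ lam hproper).prodMk_of_t2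
      (lam.continuous_act.comp DiagonalDomain.continuous_toActDomain)
  refine isProperMap_of_comp_of_inj (g := fun q : FibreProduct ρ lam × FibreProduct ρ lam =>
      ((q.1.1.1, q.2), q.1.1.2)) (continuous_diagonalPairMap ρ lam) (by fun_prop) hext ?_
  rintro ⟨⟨⟨a, b⟩, _⟩, p⟩ ⟨⟨⟨a', b'⟩, _⟩, p'⟩ h
  simp only [Prod.mk.injEq] at h
  obtain ⟨⟨rfl, rfl⟩, rfl⟩ := h
  rfl

end Statement8
end

section
/- Let X : H ← G and Y : G ← K be groupoid correspondences between étale groupoids. Then there is a canonical homeomorphism (X ×_{s,G⁰,r} Y)/K ≅ X ×_{s,G⁰,r_*} (Y/K), induced by (x,y) ↦ (x, p_Y(y)), where p_Y : Y → Y/K is the orbit projection and r_* : Y/K → G⁰ is induced by the left anchor map r of Y. -/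
open Topology

variable {A O : Type} [TopologicalSpace A] [TopologicalSpace O]

variable {AH OH : Type} [TopologicalSpace AH] [TopologicalSpace OH]

namespace RightAction

variable {A O : Type} [TopologicalSpace A] [TopologicalSpace O]
  {G : EtaleGroupoid A O} {X : Type} [TopologicalSpace X]

theorem orbitRel_equivalence_s10 (ρ : RightAction G X) : Equivalence ρ.OrbitRel := by
  constructor
  · intro x
    exact ⟨G.unit (ρ.anchor x), (G.r_unit _).symm, (ρ.act_unit x).symm⟩
  · rintro x y ⟨g, hg, rfl⟩
    refine ⟨G.inv g, ?_, ?_⟩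
    · rw [ρ.anchor_act x g hg, G.r_inv]
    · rw [ρ.act_mul x g (G.inv g) hg (G.r_inv g).symm, G.mul_inv, ← hg, ρ.act_unit]
  · rintro x y z ⟨g, hg, rfl⟩ ⟨h, hh, rfl⟩
    have hsr : G.s g = G.r h := by rw [← ρ.anchor_act x g hg]; exact hh
    exact ⟨G.mul g h, hg.trans (G.r_mul g h hsr).symm, ρ.act_mul x g h hg hsr⟩

theorem orbitMap_eq_iff (ρ : RightAction G X) {x y : X} :
    ρ.orbitMap x = ρ.orbitMap y ↔ ρ.OrbitRel x y := by
  rw [orbitMap]; exact Quot.eq.trans ρ.orbitRel_equivalence_s10.eqvGen_iff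

/-- The first projection of the action fibre product is an open map, since `r` is a
local homeomorphism. -/
theorem isOpenMap_pr1 (ρ : RightAction G X) :
    IsOpenMap fun p : { p : X × A // ρ.anchor p.1 = G.r p.2 } => p.1.1 := by
  intro W hW
  obtain ⟨Wt, hWt, rfl⟩ := isOpen_induced_iff.mp hW
  rw [isOpen_iff_forall_mem_open]
  rintro y₀ ⟨⟨⟨y₀', k₀⟩, hp⟩, hpW, rfl⟩
  obtain ⟨S, T, hS, hT, hyS, hkT, hST⟩ := isOpen_prod_iff.mp hWt _ _ hpW
  obtain ⟨e, hke, hre⟩ := G.etale_r k₀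
  refine ⟨S ∩ ρ.anchor ⁻¹' (e '' (T ∩ e.source)), ?_, ?_, ?_⟩
  · rintro y ⟨hyS', k, hkTs, hky⟩
    have hk : ρ.anchor y = G.r k := by rw [hre]; exact hky.symm
    exact ⟨⟨(y, k), hk⟩, hST ⟨hyS', hkTs.1⟩, rfl⟩
  · exact hS.inter (IsOpen.preimage ρ.continuous_anchor
      (e.isOpen_image_of_subset_source (hT.inter e.open_source)
        Set.inter_subset_right))
  · exact ⟨hyS, k₀, ⟨hkT, hke⟩, by rw [← hre]; exact hp.symm⟩

/-- The orbit space projection is an open map when `r` is a local homeomorphism. -/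
theorem isOpenMap_orbitMap (ρ : RightAction G X) : IsOpenMap ρ.orbitMap := by
  intro V hV
  have key : ρ.orbitMap ⁻¹' (ρ.orbitMap '' V) =
      (fun p : { p : X × A // ρ.anchor p.1 = G.r p.2 } => p.1.1) ''
        ((fun p : { p : X × A // ρ.anchor p.1 = G.r p.2 } => ρ.act p.1.1 p.1.2) ⁻¹' V) := by
    ext y
    constructor
    · rintro ⟨x, hxV, hxy⟩
      obtain ⟨k, hk, hy⟩ := ρ.orbitRel_equivalence_s10.symm (ρ.orbitMap_eq_iff.mp hxy)
      exact ⟨⟨(y, k), hk⟩, by simpa [← hy] using hxV, rfl⟩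
    · rintro ⟨⟨⟨y', k⟩, hk⟩, hv, rfl⟩
      exact ⟨ρ.act y' k, hv, (ρ.orbitMap_eq_iff.mpr ⟨k, hk, rfl⟩).symm⟩
  have : IsOpen (ρ.orbitMap ⁻¹' (ρ.orbitMap '' V)) := by
    rw [key]
    exact ρ.isOpenMap_pr1 _ (hV.preimage ρ.continuous_act)
  exact this

end RightAction
section Statement10

variable {A O AH OH AK OK : Type} [TopologicalSpace A] [TopologicalSpace O]
  [TopologicalSpace AH] [TopologicalSpace OH]
  [TopologicalSpace AK] [TopologicalSpace OK]
  {H : EtaleGroupoid AH OH} {G : EtaleGroupoid A O} {K : EtaleGroupoid AK OK}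
  {X Y : Type} [TopologicalSpace X] [TopologicalSpace Y]

/-- The orbit relation of the right `K`-action `(x,y)·k = (x, y·k)` on the
fibre product `X ×_{s,G⁰,r} Y`. -/
def fibreProdKRel (CX : Correspondence H G X) (CY : Correspondence G K Y) :
    { p : X × Y // CX.right.anchor p.1 = CY.left.anchor p.2 } →
      { p : X × Y // CX.right.anchor p.1 = CY.left.anchor p.2 } → Prop :=
  fun z z' => ∃ k, ∃ hk : CY.right.anchor z.1.2 = K.r k,
    z' = ⟨(z.1.1, CY.right.act z.1.2 k), by
      rw [CY.rInv_right _ _ hk]; exact z.2⟩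

/-- The map induced by `(x, y) ↦ (x, p_Y y)` on the fibre products. -/
def exchangeF (CX : Correspondence H G X) (CY : Correspondence G K Y) :
    { p : X × Y // CX.right.anchor p.1 = CY.left.anchor p.2 } →
      { q : X × CY.right.OrbitSpace // CX.right.anchor q.1 = CY.rStar q.2 } :=
  fun z => ⟨(z.1.1, CY.right.orbitMap z.1.2), z.2⟩

/-- `(X ×_{s,G⁰,r} Y)/K ≅ X ×_{s,G⁰,r_*} (Y/K)`, induced by
`(x,y) ↦ (x, p_Y y)`, for groupoid correspondences `X : H ← G`, `Y : G ← K`. -/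
theorem exchange_orbit_fibreProduct
    (CX : Correspondence H G X) (CY : Correspondence G K Y) :
    ∃ e : Quot (fibreProdKRel CX CY) ≃ₜ
        { q : X × CY.right.OrbitSpace // CX.right.anchor q.1 = CY.rStar q.2 },
      ∀ z : { p : X × Y // CX.right.anchor p.1 = CY.left.anchor p.2 },
        e (Quot.mk _ z) = ⟨(z.1.1, CY.right.orbitMap z.1.2), z.2⟩ := by
  have hPYopen : IsOpenMap CY.right.orbitMap := CY.right.isOpenMap_orbitMap
  have hPYcont : Continuous CY.right.orbitMap := continuous_quot_mk
  have hsound : ∀ z z', fibreProdKRel CX CY z z' →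
      exchangeF CX CY z = exchangeF CX CY z' := by
    rintro z z' ⟨k, hk, rfl⟩
    apply Subtype.ext
    have h2 : CY.right.orbitMap z.1.2 = CY.right.orbitMap (CY.right.act z.1.2 k) :=
      CY.right.orbitMap_eq_iff.mpr ⟨k, hk, rfl⟩
    show (z.1.1, CY.right.orbitMap z.1.2) = (z.1.1, CY.right.orbitMap (CY.right.act z.1.2 k))
    rw [h2]
  have hFcont : Continuous (exchangeF CX CY) :=
    Continuous.subtype_mk
      ((continuous_subtype_val.fst).prodMk (hPYcont.comp continuous_subtype_val.snd)) _
  set efun : Quot (fibreProdKRel CX CY) →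
      { q : X × CY.right.OrbitSpace // CX.right.anchor q.1 = CY.rStar q.2 } :=
    Quot.lift (exchangeF CX CY) hsound with hefun
  have hinj : Function.Injective efun := by
    intro a b
    induction a using Quot.ind with | _ z =>
    induction b using Quot.ind with | _ z' =>
    intro h
    have h' : exchangeF CX CY z = exchangeF CX CY z' := h
    have h1 : z.1.1 = z'.1.1 := congrArg (fun q => q.1.1) h'
    have h2 : CY.right.orbitMap z.1.2 = CY.right.orbitMap z'.1.2 :=
      congrArg (fun q => q.1.2) h'
    obtain ⟨k, hk, hy⟩ := CY.right.orbitMap_eq_iff.mp h2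
    refine Quot.sound ⟨k, hk, ?_⟩
    apply Subtype.ext
    show z'.1 = (z.1.1, CY.right.act z.1.2 k)
    rw [h1, ← hy]
  have hsurj : Function.Surjective efun := by
    rintro ⟨⟨x, c⟩, hc⟩
    obtain ⟨y, rfl⟩ := Quot.exists_rep c
    exact ⟨Quot.mk _ ⟨(x, y), hc⟩, rfl⟩
  have hcont : Continuous efun := continuous_quot_lift hsound hFcont
  have hFopen : IsOpenMap (exchangeF CX CY) := by
    intro U hU
    obtain ⟨Ut, hUt, rfl⟩ := isOpen_induced_iff.mp hU
    have himg : exchangeF CX CY '' (Subtype.val ⁻¹' Ut) =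
        Subtype.val ⁻¹' (Prod.map id CY.right.orbitMap '' Ut) := by
      ext q
      constructor
      · rintro ⟨z, hz, rfl⟩
        exact ⟨z.1, hz, rfl⟩
      · rintro ⟨⟨x', y⟩, hmem, heq⟩
        have hx : q.1.1 = x' := (congrArg Prod.fst heq).symm
        have hc : q.1.2 = CY.right.orbitMap y := (congrArg Prod.snd heq).symm
        have hanch : CX.right.anchor x' = CY.left.anchor y := by
          have hq := q.2
          rw [hx, hc] at hq
          exact hq
        refine ⟨⟨(x', y), hanch⟩, hmem, ?_⟩
        apply Subtype.ext
        show (x', CY.right.orbitMap y) = q.1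
        rw [← hx, ← hc]
    rw [himg]
    exact (IsOpenMap.id.prodMap hPYopen Ut hUt).preimage continuous_subtype_val
  have hopen : IsOpenMap efun := by
    intro V hV
    have himg : efun '' V = exchangeF CX CY '' (Quot.mk _ ⁻¹' V) := by
      ext q
      constructor
      · rintro ⟨v, hv, rfl⟩
        obtain ⟨z, rfl⟩ := Quot.exists_rep v
        exact ⟨z, hv, rfl⟩
      · rintro ⟨z, hz, rfl⟩
        exact ⟨Quot.mk _ z, hz, rfl⟩
    rw [himg]
    exact hFopen _ (hV.preimage continuous_quot_mk)
  exact ⟨Equiv.toHomeomorphOfContinuousOpen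
      (Equiv.ofBijective efun ⟨hinj, hsurj⟩) hcont hopen, fun z => rfl⟩

end Statement10
end

section
/- Let X, Y : H ← G be groupoid correspondences between étale groupoids. Any H,G-equivariant continuous map α : X → Y is a local homeomorphism. Consequently, an injective H,G-equivariant continuous map X → Y is a homeomorphism onto an open subset of Y, and a bijective one is a homeomorphism. -/
open Topology

variable {A O : Type} [TopologicalSpace A] [TopologicalSpace O]

variable {AH OH : Type} [TopologicalSpace AH] [TopologicalSpace OH]

/-- Any `H,G`-equivariant continuous map `α : X → Y` between groupoid
correspondences `X, Y : H ← G` is a local homeomorphism.  Consequently, an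
injective such map is a homeomorphism onto an open subset of `Y`, and a
bijective one is a homeomorphism. -/
theorem equivariant_map_isLocalHomeomorph
    {A O AH OH : Type} [TopologicalSpace A] [TopologicalSpace O]
    [TopologicalSpace AH] [TopologicalSpace OH]
    {H : EtaleGroupoid AH OH} {G : EtaleGroupoid A O}
    {X Y : Type} [TopologicalSpace X] [TopologicalSpace Y]
    (CX : Correspondence H G X) (CY : Correspondence H G Y)
    (α : X → Y) (hcont : Continuous α)
    (hs : ∀ x, CY.right.anchor (α x) = CX.right.anchor x)
    (hr : ∀ x, CY.left.anchor (α x) = CX.left.anchor x)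
    (hactR : ∀ x g, CX.right.anchor x = G.r g →
      α (CX.right.act x g) = CY.right.act (α x) g)
    (hactL : ∀ h x, H.s h = CX.left.anchor x →
      α (CX.left.act h x) = CY.left.act h (α x)) :
    IsLocalHomeomorph α ∧
      (Function.Injective α → Topology.IsOpenEmbedding α) ∧
      (Function.Bijective α → ∃ e : X ≃ₜ Y, ⇑e = α) := by
  have hcomp : IsLocalHomeomorph (CY.right.anchor ∘ α) := by
    have : CY.right.anchor ∘ α = CX.right.anchor := funext hs
    rw [this]; exact CX.etale_s
  have hloc : IsLocalHomeomorph α := hcomp.of_comp CY.etale_s hcont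
  refine ⟨hloc, fun hinj => hloc.isOpenEmbedding_of_injective hinj, fun hb => ?_⟩
  exact ⟨Equiv.toHomeomorphOfContinuousOpen (Equiv.ofBijective α hb) hcont
    hloc.isOpenMap, rfl⟩
end
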